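/- Let T : V → ℝ be a Bellman fixed point, let (T_i) be the chase-time iteration, and suppose every vertex has at least one chase path with respect to T. Then, with n = |V|, T_n(v) = T(v) for every vertex v, and moreover T_i(v) = T(v) for every i ≥ n. -/

import Mathlib

/-
A shortest chase path visits no vertex twice (otherwise the loop between the two visits could be
cut out), so every vertex has a chase path with `k < |V|` steps. The iteration `T_i` is
non-increasing, stays above any Bellman fixed point `T` by monotonicity of the Bellman operator,
and reaches `T` at the start of a chase path with `k` steps after `k + 1` iterations: walking the
path backwards from its end, where `T = 1 / p = T_1`, each Bellman step reproduces `T` one vertex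
earlier.
-/

/-- A chase path with respect to `T`: a sequence `vs 0, vs 1, …, vs k` such that
each step moves to a closed neighbor and `T (vs i) = 1 + (1 - p (vs i)) * T (vs (i+1))`
for `0 ≤ i < k`, and the last vertex satisfies `T (vs k) = 1 + (1 - p (vs k)) * T (vs k)`. -/
def IsChasePath {V : Type*} (N : V → Finset V) (p T : V → ℝ) (k : ℕ) (vs : ℕ → V) : Prop :=
  (∀ i < k, vs (i + 1) ∈ N (vs i) ∧ T (vs i) = 1 + (1 - p (vs i)) * T (vs (i + 1))) ∧
    T (vs k) = 1 + (1 - p (vs k)) * T (vs k)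

section Paths

variable {V : Type*} {R : V → V → Prop} {Q : V → Prop}

theorem exists_path_cut_loop {k a b : ℕ} {vs : ℕ → V} (hab : a ≤ b) (hbk : b ≤ k)
    (hvs : vs a = vs b) (hR : ∀ i < k, R (vs i) (vs (i + 1))) (hQ : Q (vs k)) :
    ∃ ws : ℕ → V, ws 0 = vs 0 ∧ (∀ i < k - (b - a), R (ws i) (ws (i + 1))) ∧
      Q (ws (k - (b - a))) := by
  refine ⟨fun m => vs (if m ≤ a then m else m + (b - a)), by simp, fun i hi => ?_, ?_⟩
  · rcases lt_trichotomy i a with hia | rfl | hia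
    · simpa [hia.le, Nat.succ_le_of_lt hia] using hR i (by omega)
    · simpa [hvs, show i + 1 + (b - i) = b + 1 by omega] using hR b (by omega)
    · simpa [hia.not_ge, show ¬ i + 1 ≤ a by omega, show i + 1 + (b - a) = i + (b - a) + 1 by omega]
        using hR (i + (b - a)) (by omega)
  · dsimp only
    by_cases hka : k - (b - a) ≤ a
    · rw [if_pos hka, show k - (b - a) = a by omega, hvs, show b = k by omega]
      exact hQ
    · rwa [if_neg hka, show k - (b - a) + (b - a) = k by omega]

theorem exists_path_length_lt_card [Fintype V] {k : ℕ} {vs : ℕ → V}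
    (hR : ∀ i < k, R (vs i) (vs (i + 1))) (hQ : Q (vs k)) :
    ∃ k' < Fintype.card V, ∃ ws : ℕ → V, ws 0 = vs 0 ∧ (∀ i < k', R (ws i) (ws (i + 1))) ∧
      Q (ws k') := by
  induction k using Nat.strong_induction_on generalizing vs with
  | _ k ih =>
  by_cases hk : k < Fintype.card V
  · exact ⟨k, hk, vs, rfl, hR, hQ⟩
  obtain ⟨x, y, hxy, hvs⟩ := Fintype.exists_ne_map_eq_of_card_lt (fun i : Fin (k + 1) => vs i)
    (by simp only [Fintype.card_fin]; omega)
  obtain ⟨a, b, hab, hbk, hvab⟩ : ∃ a b : ℕ, a < b ∧ b ≤ k ∧ vs a = vs b := by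
    rcases lt_or_gt_of_ne (Fin.val_ne_of_ne hxy) with h | h
    · exact ⟨x, y, h, by omega, hvs⟩
    · exact ⟨y, x, h, by omega, hvs.symm⟩
  obtain ⟨ws, hws0, hwR, hwQ⟩ := exists_path_cut_loop hab.le hbk hvab hR hQ
  obtain ⟨k', hk', us, hus0, huR, huQ⟩ := ih _ (by omega) hwR hwQ
  exact ⟨k', hk', us, hus0.trans hws0, huR, huQ⟩

end Paths

theorem IsChasePath.tail {V : Type*} {N : V → Finset V} {p T : V → ℝ} {k : ℕ} {vs : ℕ → V}
    (h : IsChasePath N p T (k + 1) vs) : IsChasePath N p T k (fun i => vs (i + 1)) :=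
  ⟨fun i hi => h.1 (i + 1) (by omega), h.2⟩

theorem IsChasePath.exists_length_lt_card {V : Type*} [Fintype V] {N : V → Finset V}
    {p T : V → ℝ} {k : ℕ} {vs : ℕ → V} (h : IsChasePath N p T k vs) :
    ∃ k' < Fintype.card V, ∃ ws : ℕ → V, ws 0 = vs 0 ∧ IsChasePath N p T k' ws :=
  exists_path_length_lt_card (R := fun x y => y ∈ N x ∧ T x = 1 + (1 - p x) * T y)
    (Q := fun x => T x = 1 + (1 - p x) * T x) h.1 h.2

section Bellman

variable {V : Type*} (N : V → Finset V) (hN : ∀ v, v ∈ N v) (p : V → ℝ)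

def bellman (f : V → ℝ) (v : V) : ℝ :=
  1 + (1 - p v) * (N v).inf' ⟨v, hN v⟩ f

variable {N hN p}

theorem bellman_mono (hp : ∀ v, p v ≤ 1) {f g : V → ℝ} (hfg : f ≤ g) :
    bellman N hN p f ≤ bellman N hN p g := fun v => by
  have hinf : (N v).inf' ⟨v, hN v⟩ f ≤ (N v).inf' ⟨v, hN v⟩ g :=
    Finset.le_inf' _ _ fun w hw => (Finset.inf'_le f hw).trans (hfg w)
  have := hp v
  unfold bellman
  nlinarith

theorem bellman_le_of_mem (hp : ∀ v, p v ≤ 1) (f : V → ℝ) {v w : V} (hw : w ∈ N v) :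
    bellman N hN p f v ≤ 1 + (1 - p v) * f w := by
  have := hp v
  have := Finset.inf'_le f hw
  unfold bellman
  nlinarith

theorem le_one_div_of_eq_bellman (hp : ∀ v, 0 < p v ∧ p v ≤ 1) {T : V → ℝ}
    (hT : ∀ v, T v = bellman N hN p T v) (v : V) : T v ≤ 1 / p v := by
  have hfix := (hT v).trans_le (bellman_le_of_mem (fun v => (hp v).2) T (hN v))
  rw [le_div_iff₀ (hp v).1]
  linarith

variable {Tseq : ℕ → V → ℝ}

theorem le_iterate_of_eq_bellman (hp : ∀ v, 0 < p v ∧ p v ≤ 1) {T : V → ℝ}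
    (hT : ∀ v, T v = bellman N hN p T v) (hTseq1 : ∀ v, Tseq 1 v = 1 / p v)
    (hTseqS : ∀ i, 1 ≤ i → ∀ v, Tseq (i + 1) v = min (Tseq i v) (bellman N hN p (Tseq i) v))
    {i : ℕ} (hi : 1 ≤ i) : T ≤ Tseq i := by
  induction i, hi using Nat.le_induction with
  | base => exact fun v => (hTseq1 v).symm ▸ le_one_div_of_eq_bellman hp hT v
  | succ i hi ih =>
    intro v
    rw [hTseqS i hi v]
    exact le_min (ih v) ((hT v).trans_le (bellman_mono (fun v => (hp v).2) ih v))

theorem IsChasePath.iterate_le (hp : ∀ v, 0 < p v ∧ p v ≤ 1) {T : V → ℝ}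
    (hTseq1 : ∀ v, Tseq 1 v = 1 / p v)
    (hTseqS : ∀ i, 1 ≤ i → ∀ v, Tseq (i + 1) v = min (Tseq i v) (bellman N hN p (Tseq i) v))
    {k : ℕ} {vs : ℕ → V} (h : IsChasePath N p T k vs) : Tseq (k + 1) (vs 0) ≤ T (vs 0) := by
  induction k generalizing vs with
  | zero =>
    have hend := h.2
    rw [hTseq1, div_le_iff₀ (hp (vs 0)).1]
    linarith
  | succ k ih =>
    obtain ⟨hmem, hstep⟩ := h.1 0 k.succ_pos
    have hnext := ih h.tail
    calc Tseq (k + 1 + 1) (vs 0) ≤ bellman N hN p (Tseq (k + 1)) (vs 0) :=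
          hTseqS (k + 1) k.succ_pos (vs 0) ▸ min_le_right _ _
      _ ≤ 1 + (1 - p (vs 0)) * Tseq (k + 1) (vs 1) := bellman_le_of_mem (fun v => (hp v).2) _ hmem
      _ ≤ 1 + (1 - p (vs 0)) * T (vs 1) := by gcongr; linarith [(hp (vs 0)).2]
      _ = T (vs 0) := hstep.symm

end Bellman

theorem stmt_8_general {V : Type*} [Fintype V]
    (N : V → Finset V) (hN : ∀ v, v ∈ N v)
    (p : V → ℝ) (hp : ∀ v, 0 < p v ∧ p v ≤ 1)
    (T : V → ℝ)
    (hT : ∀ v, T v = 1 + (1 - p v) * (N v).inf' ⟨v, hN v⟩ T)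
    (Tseq : ℕ → V → ℝ)
    (hTseq1 : ∀ v, Tseq 1 v = 1 / p v)
    (hTseqS : ∀ i, 1 ≤ i → ∀ v,
      Tseq (i + 1) v =
        min (Tseq i v) (1 + (1 - p v) * (N v).inf' ⟨v, hN v⟩ (Tseq i)))
    (hchase : ∀ v : V, ∃ (k : ℕ) (vs : ℕ → V), vs 0 = v ∧ IsChasePath N p T k vs) :
    (∀ v, Tseq (Fintype.card V) v = T v) ∧
      ∀ i, Fintype.card V ≤ i → ∀ v, Tseq i v = T v := by
  have hanti : ∀ v, AntitoneOn (Tseq · v) (Set.Ici 1) := fun v =>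
    antitoneOn_nat_Ici_of_succ_le fun i hi => (hTseqS i hi v).trans_le (min_le_left _ _)
  have hstable : ∀ i, Fintype.card V ≤ i → ∀ v, Tseq i v = T v := by
    intro i hi v
    obtain ⟨_, vs₀, rfl, hpath₀⟩ := hchase v
    obtain ⟨k, hk, vs, hvs, hpath⟩ := hpath₀.exists_length_lt_card
    rw [← hvs]
    refine le_antisymm ?_ (le_iterate_of_eq_bellman (hN := hN) hp hT hTseq1 hTseqS (by omega) _)
    calc Tseq i (vs 0) ≤ Tseq (k + 1) (vs 0) :=
          hanti _ (Set.mem_Ici.2 k.succ_pos) (Set.mem_Ici.2 (by omega)) (by omega)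
      _ ≤ T (vs 0) := hpath.iterate_le (hN := hN) hp hTseq1 hTseqS
  exact ⟨fun v => hstable _ le_rfl v, hstable⟩

/-- Let `T` be a Bellman fixed point, `(Tseq i)` the chase-time
iteration, and suppose every vertex has at least one chase path with respect to `T`.
Then with `n = |V|`, `Tseq n v = T v` for every vertex `v`, and moreover
`Tseq i v = T v` for every `i ≥ n`. -/
theorem stmt_8 {V : Type*} [Fintype V] [Nonempty V]
    (N : V → Finset V) (hN : ∀ v, v ∈ N v)
    (p : V → ℝ) (hp : ∀ v, 0 < p v ∧ p v ≤ 1)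
    (T : V → ℝ)
    (hT : ∀ v, T v = 1 + (1 - p v) * (N v).inf' ⟨v, hN v⟩ T)
    (Tseq : ℕ → V → ℝ)
    (hTseq1 : ∀ v, Tseq 1 v = 1 / p v)
    (hTseqS : ∀ i, 1 ≤ i → ∀ v,
      Tseq (i + 1) v =
        min (Tseq i v) (1 + (1 - p v) * (N v).inf' ⟨v, hN v⟩ (Tseq i)))
    (hchase : ∀ v : V, ∃ (k : ℕ) (vs : ℕ → V), vs 0 = v ∧ IsChasePath N p T k vs) :
    (∀ v, Tseq (Fintype.card V) v = T v) ∧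
      ∀ i, Fintype.card V ≤ i → ∀ v, Tseq i v = T v :=
  stmt_8_general N hN p hp T hT Tseq hTseq1 hTseqS hchase
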